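/- Let α > 1, let (Ω, ν) be a probability space, and let (P_η)_{η∈Ω} and (Q_η)_{η∈Ω} be measurable families of probability measures on a common standard Borel space with P_η absolutely continuous with respect to Q_η for ν-almost every η, and with η ↦ D_α(P_η‖Q_η) measurable. Let P = ∫ P_η dν(η) and Q = ∫ Q_η dν(η) be the mixtures with the common mixing law ν. Then D_α(P‖Q) ≤ (α−1)⁻¹·log ∫ exp( (α−1)·D_α(P_η‖Q_η) ) dν(η). Moreover, if M := ess sup_η D_α(P_η‖Q_η) < ∞ and D_α(P_η‖Q_η) is not ν-almost surely constant, then the right-hand side is strictly smaller than M. -/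

import Mathlib

open MeasureTheory ProbabilityTheory Real
open scoped ENNReal NNReal RealInnerProductSpace BigOperators

noncomputable section

/-- `ℝ^d` with its Euclidean structure. -/
abbrev Euc (d : ℕ) := EuclideanSpace ℝ (Fin d)

open Classical in
/-- Rényi divergence of order `α`: `(α-1)⁻¹ log ∫ (dP/dQ)^α dQ`, with value `∞` when
`P` is not absolutely continuous w.r.t. `Q` or the defining integral is infinite. -/
noncomputable def renyiDiv {Ω : Type*} [MeasurableSpace Ω] (α : ℝ) (P Q : Measure Ω) : ℝ≥0∞ :=
  if P ≪ Q ∧ ∫⁻ x, P.rnDeriv Q x ^ α ∂Q ≠ ∞ then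
    ENNReal.ofReal ((α - 1)⁻¹ * Real.log (∫⁻ x, P.rnDeriv Q x ^ α ∂Q).toReal)
  else ∞

/-- extended exponential on `ℝ≥0∞`. -/
noncomputable def eexp (x : ℝ≥0∞) : ℝ≥0∞ :=
  if x = ∞ then ∞ else ENNReal.ofReal (Real.exp x.toReal)

/-- extended logarithm on `ℝ≥0∞` (nonnegative part). -/
noncomputable def elog (x : ℝ≥0∞) : ℝ≥0∞ :=
  if x = ∞ then ∞ else ENNReal.ofReal (Real.log x.toReal)

/-- pushforward of a measure on `ℝ^d` under the projection `a ↦ ⟨a, u⟩`. -/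
noncomputable def proj {d : ℕ} (u : Euc d) (P : Measure (Euc d)) : Measure ℝ :=
  P.map fun a => ⟪a, u⟫

/-- Average sliced Rényi divergence with slice profile `ω`. -/
noncomputable def aveSD {d : ℕ} (α : ℝ) (ω : Measure (Euc d)) (P Q : Measure (Euc d)) : ℝ≥0∞ :=
  ∫⁻ u, renyiDiv α (proj u P) (proj u Q) ∂ω

/-- Joint sliced Rényi divergence with slice profile `ω`. -/
noncomputable def jsd {d : ℕ} (α : ℝ) (ω : Measure (Euc d)) (P Q : Measure (Euc d)) : ℝ≥0∞ :=
  ENNReal.ofReal ((α - 1)⁻¹) *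
    elog (∫⁻ u, eexp (ENNReal.ofReal (α - 1) * renyiDiv α (proj u P) (proj u Q)) ∂ω)

/-- ∞-Wasserstein distance: infimum over couplings of the essential supremum of the distance. -/
noncomputable def wInf {X : Type*} [MeasurableSpace X] [PseudoEMetricSpace X]
    (μ ν : Measure X) : ℝ≥0∞ :=
  ⨅ (cpl : Measure (X × X)) (_ : cpl.map Prod.fst = μ ∧ cpl.map Prod.snd = ν),
    essSup (fun p : X × X => edist p.1 p.2) cpl

/-- convolution of measures: the law of `X + N` for independent `X ∼ P`, `N ∼ ζ`. -/
noncomputable def mconv {G : Type*} [MeasurableSpace G] [Add G] (P ζ : Measure G) : Measure G :=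
  (P.prod ζ).map fun p => p.1 + p.2

/-- the isotropic Gaussian measure `N(0, v·I_d)` on `ℝ^d`. -/
noncomputable def isoGaussian (d : ℕ) (v : ℝ≥0) : Measure (Euc d) :=
  (Measure.pi fun _ : Fin d => gaussianReal 0 v).map
    (MeasurableEquiv.toLp 2 (Fin d → ℝ))

/-- approximate max-divergence `D_∞^δ`. -/
noncomputable def dInfDelta {Ω : Type*} [MeasurableSpace Ω] (δ : ℝ) (P Q : Measure Ω) : ℝ≥0∞ :=
  sInf {ε : ℝ≥0∞ | ∀ A : Set Ω, MeasurableSet A → P A ≤ eexp ε * Q A + ENNReal.ofReal δ}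

end

section AuxLemmas

open MeasureTheory

lemma measurable_eexp : Measurable eexp := by
  unfold eexp
  refine Measurable.ite (MeasurableSet.singleton ∞) measurable_const ?_
  exact (Real.measurable_exp.comp ENNReal.measurable_toReal).ennreal_ofReal

lemma one_le_eexp (x : ℝ≥0∞) : 1 ≤ eexp x := by
  unfold eexp
  split_ifs with h
  · exact le_top
  · rw [← ENNReal.ofReal_one]
    exact ENNReal.ofReal_le_ofReal (Real.one_le_exp ENNReal.toReal_nonneg)

lemma eexp_mono {x y : ℝ≥0∞} (h : x ≤ y) : eexp x ≤ eexp y := by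
  unfold eexp
  rcases eq_or_ne y ∞ with hy | hy
  · simp [hy]
  · have hx : x ≠ ∞ := ne_top_of_le_ne_top hy h
    rw [if_neg hx, if_neg hy]
    exact ENNReal.ofReal_le_ofReal (Real.exp_le_exp.mpr (ENNReal.toReal_mono hy h))

lemma eexp_strictMono {x y : ℝ≥0∞} (h : x < y) (hy : y ≠ ∞) : eexp x < eexp y := by
  have hx : x ≠ ∞ := h.ne_top
  unfold eexp
  rw [if_neg hx, if_neg hy]
  rw [ENNReal.ofReal_lt_ofReal_iff (Real.exp_pos _)]
  exact Real.exp_lt_exp.mpr ((ENNReal.toReal_lt_toReal hx hy).mpr h)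

lemma aux_iSup_min_rpow {α : ℝ} (hα : 1 < α) (a : ℝ≥0∞) :
    ⨆ n : ℕ, (min a n) ^ α = a ^ α := by
  apply le_antisymm
  · exact iSup_le fun n => ENNReal.rpow_le_rpow (min_le_left _ _) (by linarith)
  · by_cases ha : a = ∞
    · subst ha
      rw [ENNReal.top_rpow_of_pos (by linarith)]
      rw [top_le_iff]
      rw [eq_top_iff]
      calc (∞ : ℝ≥0∞) = ⨆ n : ℕ, (n : ℝ≥0∞) := ENNReal.iSup_natCast.symm
        _ ≤ ⨆ n : ℕ, (min ∞ (n : ℝ≥0∞)) ^ α := by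
            refine iSup_mono fun n => ?_
            rw [min_eq_right le_top]
            rcases Nat.eq_zero_or_pos n with h0 | h1
            · simp [h0]
            · calc (n : ℝ≥0∞) = (n : ℝ≥0∞) ^ (1 : ℝ) := (ENNReal.rpow_one _).symm
                _ ≤ (n : ℝ≥0∞) ^ α :=
                    ENNReal.rpow_le_rpow_of_exponent_le (by exact_mod_cast h1) hα.le
    · obtain ⟨n, hn⟩ := ENNReal.exists_nat_gt ha
      calc a ^ α = (min a n) ^ α := by rw [min_eq_left hn.le]
        _ ≤ ⨆ n : ℕ, (min a n) ^ α := le_iSup (fun n : ℕ => (min a n) ^ α) n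

/-- Data-processing-type inequality for the `α`-power integral. -/
lemma key_dp {Y Z : Type*} [MeasurableSpace Y] [MeasurableSpace Z]
    {α : ℝ} (hα : 1 < α)
    (ξ : Measure Y) [IsFiniteMeasure ξ] {g : Y → ℝ≥0∞} (hg : Measurable g)
    {f : Y → Z} (hf : Measurable f)
    (μ : Measure Y) [IsFiniteMeasure μ] (hμ : μ = ξ.withDensity g)
    (hS : ∫⁻ y, g y ^ α ∂ξ ≠ ∞) :
    ∫⁻ z, (μ.map f).rnDeriv (ξ.map f) z ^ α ∂(ξ.map f) ≤ ∫⁻ y, g y ^ α ∂ξ := by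
  have hα0 : (0:ℝ) < α := by linarith
  have hα1 : (0:ℝ) < α - 1 := by linarith
  set S := ∫⁻ y, g y ^ α ∂ξ with hS_def
  set P := μ.map f with hP
  set Q := ξ.map f with hQ
  haveI : IsFiniteMeasure P := Measure.isFiniteMeasure_map μ f
  haveI : IsFiniteMeasure Q := Measure.isFiniteMeasure_map ξ f
  set h := P.rnDeriv Q with hh
  have hh_meas : Measurable h := Measure.measurable_rnDeriv P Q
  have hPQ : P ≪ Q := by
    rw [hP, hQ, hμ]
    exact (withDensity_absolutelyContinuous ξ g).map hf
  set q := α / (α - 1) with hq_def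
  have hq : Real.HolderConjugate α q := by
    have := Real.HolderConjugate.conjExponent hα
    rwa [Real.conjExponent] at this
  have hq0 : (0:ℝ) < q := hq.symm.pos
  have key_n : ∀ n : ℕ, ∫⁻ z, (min (h z) n) ^ α ∂Q ≤ S := by
    intro n
    set m : Z → ℝ≥0∞ := fun z => min (h z) n with hm_def
    have hm : Measurable m := hh_meas.min measurable_const
    have hm1 : Measurable fun z => m z ^ (α - 1) := hm.pow_const _
    have hmα : Measurable fun z => m z ^ α := hm.pow_const _
    have hm1f : Measurable fun y => m (f y) ^ (α - 1) := hm1.comp hf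
    have hmαf : Measurable fun y => m (f y) ^ α := hmα.comp hf
    set A := ∫⁻ z, m z ^ α ∂Q with hA_def
    have hA_top : A ≠ ∞ := by
      have hle : A ≤ (n : ℝ≥0∞) ^ α * Q Set.univ := by
        rw [← lintegral_const]
        exact lintegral_mono fun z => ENNReal.rpow_le_rpow (min_le_right _ _) hα0.le
      exact ne_top_of_le_ne_top
        (ENNReal.mul_ne_top (ENNReal.rpow_ne_top_of_nonneg hα0.le (ENNReal.natCast_ne_top n))
          (measure_ne_top Q _)) hle
    have step1 : A ≤ ∫⁻ z, m z ^ (α - 1) * h z ∂Q := by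
      refine lintegral_mono fun z => ?_
      rcases eq_or_ne (m z) 0 with h0 | h0
      · rw [h0, ENNReal.zero_rpow_of_pos hα0]
        exact zero_le
      · have hmz_top : m z ≠ ∞ :=
          ne_top_of_le_ne_top (ENNReal.natCast_ne_top n) (min_le_right _ _)
        calc m z ^ α = m z ^ (α - 1 + 1) := by norm_num
          _ = m z ^ (α - 1) * m z ^ (1:ℝ) := ENNReal.rpow_add _ _ h0 hmz_top
          _ = m z ^ (α - 1) * m z := by rw [ENNReal.rpow_one]
          _ ≤ m z ^ (α - 1) * h z := mul_le_mul_right (min_le_left _ _) _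
    have step2 : ∫⁻ z, m z ^ (α - 1) * h z ∂Q = ∫⁻ z, m z ^ (α - 1) ∂P := by
      rw [← MeasureTheory.lintegral_rnDeriv_mul hPQ hm1.aemeasurable]
      refine lintegral_congr fun z => ?_
      rw [mul_comm]
    have step3 : ∫⁻ z, m z ^ (α - 1) ∂P = ∫⁻ y, (g * fun y => m (f y) ^ (α - 1)) y ∂ξ := by
      rw [hP, hμ, lintegral_map hm1 hf,
        lintegral_withDensity_eq_lintegral_mul ξ hg hm1f]
    have step4 : ∫⁻ y, (g * fun y => m (f y) ^ (α - 1)) y ∂ξ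
        ≤ S / ENNReal.ofReal α + A / ENNReal.ofReal q := by
      have young : ∀ y, (g * fun y => m (f y) ^ (α - 1)) y
          ≤ g y ^ α / ENNReal.ofReal α + m (f y) ^ α / ENNReal.ofReal q := by
        intro y
        have hY := ENNReal.young_inequality (g y) (m (f y) ^ (α - 1)) hq
        have hexp : (α - 1) * q = α := by
          rw [hq_def]; field_simp
        rw [← ENNReal.rpow_mul, hexp] at hY
        exact hY
      calc ∫⁻ y, (g * fun y => m (f y) ^ (α - 1)) y ∂ξ
          ≤ ∫⁻ y, (g y ^ α / ENNReal.ofReal α + m (f y) ^ α / ENNReal.ofReal q) ∂ξ :=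
            lintegral_mono young
        _ = S / ENNReal.ofReal α + A / ENNReal.ofReal q := by
            simp_rw [div_eq_mul_inv]
            rw [lintegral_add_left ((hg.pow_const _).mul_const _)]
            rw [lintegral_mul_const _ (hg.pow_const _),
              lintegral_mul_const _ hmαf]
            rw [hA_def, hQ, ← lintegral_map hmα hf]
    have hcomb : A ≤ S / ENNReal.ofReal α + A / ENNReal.ofReal q := by
      calc A ≤ ∫⁻ z, m z ^ (α - 1) * h z ∂Q := step1
        _ = _ := step2
        _ = _ := step3
        _ ≤ _ := step4
    have hfin : S / ENNReal.ofReal α + A / ENNReal.ofReal q ≠ ∞ := by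
      rw [ENNReal.add_ne_top]
      constructor
      · exact (ENNReal.div_lt_top hS (by simp only [ne_eq, ENNReal.ofReal_eq_zero, not_le]; linarith)).ne
      · exact (ENNReal.div_lt_top hA_top (by simp only [ne_eq, ENNReal.ofReal_eq_zero, not_le]; linarith)).ne
    have hR := ENNReal.toReal_mono hfin hcomb
    rw [ENNReal.toReal_add
        (ENNReal.add_ne_top.mp hfin).1 (ENNReal.add_ne_top.mp hfin).2,
      ENNReal.toReal_div, ENNReal.toReal_div,
      ENNReal.toReal_ofReal hα0.le, ENNReal.toReal_ofReal hq0.le] at hR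
    set a := A.toReal
    set s := S.toReal
    have hdiv : a / q = a * (α - 1) / α := by
      rw [hq_def]
      field_simp
    rw [hdiv] at hR
    have h2 : a * α ≤ s + a * (α - 1) := by
      have h' := mul_le_mul_of_nonneg_right hR hα0.le
      rwa [add_mul, div_mul_cancel₀ _ (ne_of_gt hα0), div_mul_cancel₀ _ (ne_of_gt hα0)] at h'
    have haS : a ≤ s := by nlinarith [h2]
    exact (ENNReal.toReal_le_toReal hA_top hS).mp haS
  calc ∫⁻ z, h z ^ α ∂Q
      = ∫⁻ z, ⨆ n : ℕ, (min (h z) n) ^ α ∂Q :=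
        lintegral_congr fun z => (aux_iSup_min_rpow hα _).symm
    _ = ⨆ n : ℕ, ∫⁻ z, (min (h z) n) ^ α ∂Q := by
        refine lintegral_iSup (fun n => (hh_meas.min measurable_const).pow_const _) ?_
        intro n k hnk z
        exact ENNReal.rpow_le_rpow (min_le_min le_rfl (by exact_mod_cast hnk)) hα0.le
    _ ≤ S := iSup_le key_n

/-- Pointwise bound: the `α`-power integral is at most `eexp ((α-1) · renyiDiv)`. -/
lemma aux_renyi_le {α : ℝ} (hα : 1 < α) {X : Type*} [MeasurableSpace X]
    {P Q : Measure X} (hPQ : P ≪ Q) :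
    ∫⁻ x, P.rnDeriv Q x ^ α ∂Q ≤ eexp (ENNReal.ofReal (α - 1) * renyiDiv α P Q) := by
  have hα1 : (0:ℝ) < α - 1 := by linarith
  set t := ∫⁻ x, P.rnDeriv Q x ^ α ∂Q with ht
  by_cases htop : t = ∞
  · have hD : renyiDiv α P Q = ∞ := by
      rw [renyiDiv, if_neg]
      intro hcond
      exact hcond.2 htop
    rw [hD, ENNReal.mul_top (by simp only [ne_eq, ENNReal.ofReal_eq_zero, not_le]; linarith)]
    rw [eexp, if_pos rfl]
    exact le_top
  · rw [renyiDiv, if_pos ⟨hPQ, htop⟩]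
    rw [← ENNReal.ofReal_mul hα1.le]
    have hL : (α - 1) * ((α - 1)⁻¹ * Real.log t.toReal) = Real.log t.toReal := by
      field_simp
    rw [hL, eexp, if_neg ENNReal.ofReal_ne_top]
    by_cases h1 : 1 ≤ t.toReal
    · rw [ENNReal.toReal_ofReal (Real.log_nonneg h1), Real.exp_log (by linarith)]
      rw [ENNReal.ofReal_toReal htop]
    · push_neg at h1
      have hlt : t ≤ 1 := by
        rw [← ENNReal.ofReal_toReal htop, ← ENNReal.ofReal_one]
        exact ENNReal.ofReal_le_ofReal h1.le
      calc t ≤ 1 := hlt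
        _ ≤ ENNReal.ofReal (Real.exp (ENNReal.ofReal (Real.log t.toReal)).toReal) := by
            rw [← ENNReal.ofReal_one]
            exact ENNReal.ofReal_le_ofReal (Real.one_le_exp ENNReal.toReal_nonneg)

/-- Strict inequality part: the log-integral bound is strictly below the essential supremum. -/
lemma renyi_part2_aux {Ω' : Type*} [MeasurableSpace Ω'] (ν : Measure Ω')
    [IsProbabilityMeasure ν] {α : ℝ} (hα : 1 < α) (D : Ω' → ℝ≥0∞) (hmeas : Measurable D)
    (hM : essSup D ν ≠ ∞)
    (hnc : ¬ (∃ c : ℝ≥0∞, ∀ᵐ e ∂ν, D e = c)) :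
    ENNReal.ofReal ((α - 1)⁻¹) * elog (∫⁻ e, eexp (ENNReal.ofReal (α - 1) * D e) ∂ν)
      < essSup D ν := by
  have hα1 : (0:ℝ) < α - 1 := by linarith
  set M := essSup D ν with hM_def
  set fφ := fun e => eexp (ENNReal.ofReal (α - 1) * D e) with hfφ_def
  set C := eexp (ENNReal.ofReal (α - 1) * M) with hC_def
  have hMle : ∀ᵐ e ∂ν, D e ≤ M := ae_le_essSup
  have hargM : ENNReal.ofReal (α - 1) * M ≠ ∞ :=
    ENNReal.mul_ne_top ENNReal.ofReal_ne_top hM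
  have hC_eq : C = ENNReal.ofReal (Real.exp ((α - 1) * M.toReal)) := by
    rw [hC_def, eexp, if_neg hargM, ENNReal.toReal_mul, ENNReal.toReal_ofReal hα1.le]
  have hC_top : C ≠ ∞ := by rw [hC_eq]; exact ENNReal.ofReal_ne_top
  have hfC : ∀ᵐ e ∂ν, fφ e ≤ C := by
    filter_upwards [hMle] with e he
    exact eexp_mono (mul_le_mul_right he _)
  have hf_meas : Measurable fφ := measurable_eexp.comp (measurable_const.mul hmeas)
  have hIle : ∫⁻ e, fφ e ∂ν ≤ C := by
    calc ∫⁻ e, fφ e ∂ν ≤ ∫⁻ _, C ∂ν := lintegral_mono_ae hfC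
      _ = C := by simp
  have hIne : ∫⁻ e, fφ e ∂ν ≠ C := by
    intro hEq
    have hsub : ∫⁻ e, C - fφ e ∂ν = 0 := by
      rw [lintegral_sub hf_meas (by rw [hEq]; exact hC_top) hfC]
      simp [hEq]
    have h0 : ∀ᵐ e ∂ν, C - fφ e = 0 :=
      (lintegral_eq_zero_iff (measurable_const.sub hf_meas)).mp hsub
    have hDM : ∀ᵐ e ∂ν, D e = M := by
      filter_upwards [h0, hMle] with e h0e hle
      by_contra hne
      have hlt : D e < M := lt_of_le_of_ne hle hne
      have harg : ENNReal.ofReal (α - 1) * D e < ENNReal.ofReal (α - 1) * M := by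
        rw [ENNReal.mul_lt_mul_iff_right
          (by simp only [ne_eq, ENNReal.ofReal_eq_zero, not_le]; linarith)
          ENNReal.ofReal_ne_top]
        exact hlt
      have hlt2 : fφ e < C := eexp_strictMono harg hargM
      have hCle : C ≤ fφ e := tsub_eq_zero_iff_le.mp h0e
      exact absurd hCle (not_le.mpr hlt2)
    exact hnc ⟨M, hDM⟩
  have hIlt : ∫⁻ e, fφ e ∂ν < C := lt_of_le_of_ne hIle hIne
  have hI_top : ∫⁻ e, fφ e ∂ν ≠ ∞ := hIlt.ne_top
  have hI1 : (1:ℝ≥0∞) ≤ ∫⁻ e, fφ e ∂ν := by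
    calc (1:ℝ≥0∞) = ∫⁻ _, (1:ℝ≥0∞) ∂ν := by simp
      _ ≤ _ := lintegral_mono fun e => one_le_eexp _
  have hiR : 1 ≤ (∫⁻ e, fφ e ∂ν).toReal := by
    rw [← ENNReal.toReal_one]
    exact ENNReal.toReal_mono hI_top hI1
  have hic : (∫⁻ e, fφ e ∂ν).toReal < C.toReal :=
    (ENNReal.toReal_lt_toReal hI_top hC_top).mpr hIlt
  have hlog : Real.log (∫⁻ e, fφ e ∂ν).toReal < (α - 1) * M.toReal := by
    have h := Real.log_lt_log (by linarith) hic
    rwa [hC_eq, ENNReal.toReal_ofReal (Real.exp_nonneg _), Real.log_exp] at h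
  have hlog0 : 0 ≤ Real.log (∫⁻ e, fφ e ∂ν).toReal := Real.log_nonneg hiR
  have hMpos : 0 < M.toReal := by nlinarith
  calc ENNReal.ofReal (α - 1)⁻¹ * elog (∫⁻ e, fφ e ∂ν)
      = ENNReal.ofReal ((α - 1)⁻¹ * Real.log (∫⁻ e, fφ e ∂ν).toReal) := by
        rw [elog, if_neg hI_top, ← ENNReal.ofReal_mul (by positivity)]
    _ < ENNReal.ofReal M.toReal := by
        rw [ENNReal.ofReal_lt_ofReal_iff hMpos]
        calc (α - 1)⁻¹ * Real.log (∫⁻ e, fφ e ∂ν).toReal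
            < (α - 1)⁻¹ * ((α - 1) * M.toReal) :=
              mul_lt_mul_of_pos_left hlog (by positivity)
          _ = M.toReal := by field_simp
    _ = M := ENNReal.ofReal_toReal hM

end AuxLemmas


/-- Rényi divergence of shared mixtures:
for measurable families `(P_η)` and `(Q_η)` of probability measures (Markov kernels)
on a standard Borel space with `P_η ≪ Q_η` ν-a.e. and measurable
`η ↦ D_α(P_η‖Q_η)`, the Rényi divergence of the mixtures with common mixing law `ν`
satisfies `D_α(P‖Q) ≤ (α-1)⁻¹ log ∫ exp((α-1) D_α(P_η‖Q_η)) dν(η)`; moreover the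
right-hand side is strictly smaller than `M = ess sup_η D_α(P_η‖Q_η)` when `M < ∞`
and `D_α(P_η‖Q_η)` is not ν-a.s. constant. -/
theorem renyi_mixture_bound {α : ℝ} (hα : 1 < α)
    {Ω' : Type*} [MeasurableSpace Ω'] (ν : Measure Ω') [IsProbabilityMeasure ν]
    {X : Type*} [MeasurableSpace X] [StandardBorelSpace X]
    (κ η : Kernel Ω' X) [IsMarkovKernel κ] [IsMarkovKernel η]
    (hac : ∀ᵐ e ∂ν, κ e ≪ η e)
    (hmeas : Measurable fun e => renyiDiv α (κ e) (η e)) :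
    renyiDiv α (ν.bind fun e => κ e) (ν.bind fun e => η e) ≤
      ENNReal.ofReal ((α - 1)⁻¹) *
        elog (∫⁻ e, eexp (ENNReal.ofReal (α - 1) * renyiDiv α (κ e) (η e)) ∂ν) ∧
    (essSup (fun e => renyiDiv α (κ e) (η e)) ν ≠ ∞ →
      ¬ (∃ c : ℝ≥0∞, ∀ᵐ e ∂ν, renyiDiv α (κ e) (η e) = c) →
      ENNReal.ofReal ((α - 1)⁻¹) *
          elog (∫⁻ e, eexp (ENNReal.ofReal (α - 1) * renyiDiv α (κ e) (η e)) ∂ν)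
        < essSup (fun e => renyiDiv α (κ e) (η e)) ν) := by
  have hα1 : (0:ℝ) < α - 1 := by linarith
  have hc_ne : ENNReal.ofReal (α - 1)⁻¹ ≠ 0 := by
    simp only [ne_eq, ENNReal.ofReal_eq_zero, not_le]
    positivity
  constructor
  · -- Part 1
    set I := ∫⁻ e, eexp (ENNReal.ofReal (α - 1) * renyiDiv α (κ e) (η e)) ∂ν with hI_def
    set g : Ω' × X → ℝ≥0∞ := fun p => Kernel.rnDeriv κ η p.1 p.2 with hg_def
    have hg : Measurable g := Kernel.measurable_rnDeriv κ η
    have hμeq : ν ⊗ₘ κ = (ν ⊗ₘ η).withDensity g := by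
      ext s hs
      rw [withDensity_apply _ hs, Measure.compProd_apply hs,
        ← lintegral_indicator hs, Measure.lintegral_compProd (hg.indicator hs)]
      refine lintegral_congr_ae ?_
      filter_upwards [hac] with e hace
      have hind : ∀ x : X, s.indicator g (e, x)
          = (Prod.mk e ⁻¹' s).indicator (fun x => Kernel.rnDeriv κ η e x) x := by
        intro x
        by_cases hx : (e, x) ∈ s
        · rw [Set.indicator_of_mem hx, Set.indicator_of_mem (Set.mem_preimage.mpr hx)]
        · rw [Set.indicator_of_notMem hx,
            Set.indicator_of_notMem (fun hc => hx (Set.mem_preimage.mp hc))]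
      calc κ e (Prod.mk e ⁻¹' s)
          = ∫⁻ x in Prod.mk e ⁻¹' s, (κ e).rnDeriv (η e) x ∂(η e) :=
            (Measure.setLIntegral_rnDeriv hace _).symm
        _ = ∫⁻ x in Prod.mk e ⁻¹' s, Kernel.rnDeriv κ η e x ∂(η e) :=
            (lintegral_congr_ae (ae_restrict_of_ae Kernel.rnDeriv_eq_rnDeriv_measure)).symm
        _ = ∫⁻ x, (Prod.mk e ⁻¹' s).indicator (fun x => Kernel.rnDeriv κ η e x) x ∂(η e) :=
            (lintegral_indicator (measurable_prodMk_left hs) _).symm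
        _ = ∫⁻ x, s.indicator g (e, x) ∂(η e) := lintegral_congr fun x => (hind x).symm
    haveI : IsFiniteMeasure ((ν ⊗ₘ η).withDensity g) := by
      rw [← hμeq]; infer_instance
    have hbindκ : (ν.bind fun e => κ e) = (ν ⊗ₘ κ).map Prod.snd := by
      ext s hs
      rw [Measure.bind_apply hs κ.measurable.aemeasurable, Measure.map_apply measurable_snd hs,
        Measure.compProd_apply (measurable_snd hs)]
      rfl
    have hbindη : (ν.bind fun e => η e) = (ν ⊗ₘ η).map Prod.snd := by
      ext s hs
      rw [Measure.bind_apply hs η.measurable.aemeasurable, Measure.map_apply measurable_snd hs,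
        Measure.compProd_apply (measurable_snd hs)]
      rfl
    have hSI : ∫⁻ p, g p ^ α ∂(ν ⊗ₘ η) ≤ I := by
      rw [Measure.lintegral_compProd (hg.pow_const _), hI_def]
      refine lintegral_mono_ae ?_
      filter_upwards [hac] with e hace
      have h1 : ∫⁻ x, g (e, x) ^ α ∂(η e) = ∫⁻ x, (κ e).rnDeriv (η e) x ^ α ∂(η e) := by
        refine lintegral_congr_ae ?_
        filter_upwards [Kernel.rnDeriv_eq_rnDeriv_measure (κ := κ) (η := η) (a := e)]
          with x hx
        rw [show g (e, x) = Kernel.rnDeriv κ η e x from rfl, hx]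
      rw [h1]
      exact aux_renyi_le hα hace
    rcases eq_or_ne I ∞ with hI_top | hI_top
    · rw [hI_top]
      have helog : elog ∞ = ∞ := by rw [elog, if_pos rfl]
      rw [helog, ENNReal.mul_top hc_ne]
      exact le_top
    · have hS_top : ∫⁻ p, g p ^ α ∂(ν ⊗ₘ η) ≠ ∞ := ne_top_of_le_ne_top hI_top hSI
      have hkey := key_dp hα (ν ⊗ₘ η) hg measurable_snd (ν ⊗ₘ κ) hμeq hS_top
      have hTmI : ∫⁻ z, ((ν ⊗ₘ κ).map Prod.snd).rnDeriv ((ν ⊗ₘ η).map Prod.snd) z ^ α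
          ∂((ν ⊗ₘ η).map Prod.snd) ≤ I := hkey.trans hSI
      have hPQ : (ν ⊗ₘ κ).map Prod.snd ≪ (ν ⊗ₘ η).map Prod.snd :=
        (Measure.AbsolutelyContinuous.compProd_right hac).map measurable_snd
      rw [hbindκ, hbindη]
      rw [renyiDiv, if_pos ⟨hPQ, ne_top_of_le_ne_top hI_top hTmI⟩]
      have hI1 : (1:ℝ≥0∞) ≤ I := by
        rw [hI_def]
        calc (1:ℝ≥0∞) = ∫⁻ _, (1:ℝ≥0∞) ∂ν := by simp
          _ ≤ _ := lintegral_mono fun e => one_le_eexp _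
      have helog : elog I = ENNReal.ofReal (Real.log I.toReal) := by
        rw [elog, if_neg hI_top]
      rw [helog, ← ENNReal.ofReal_mul (by positivity)]
      refine ENNReal.ofReal_le_ofReal ?_
      refine mul_le_mul_of_nonneg_left ?_ (by positivity)
      set Tm := ∫⁻ z, ((ν ⊗ₘ κ).map Prod.snd).rnDeriv ((ν ⊗ₘ η).map Prod.snd) z ^ α
          ∂((ν ⊗ₘ η).map Prod.snd) with hTm_def
      have hT_le : Tm.toReal ≤ I.toReal := ENNReal.toReal_mono hI_top hTmI
      by_cases hT0 : Tm.toReal = 0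
      · rw [hT0, Real.log_zero]
        refine Real.log_nonneg ?_
        rw [← ENNReal.toReal_one]
        exact ENNReal.toReal_mono hI_top hI1
      · exact Real.log_le_log (lt_of_le_of_ne ENNReal.toReal_nonneg (Ne.symm hT0)) hT_le
  · -- Part 2
    intro hM hnc
    exact renyi_part2_aux ν hα (fun e => renyiDiv α (κ e) (η e)) hmeas hM hnc
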